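/- Let F be a differential field of characteristic zero whose field of constants is algebraically closed, let n ≥ 1 and k ≥ 2, and let (y_{ij})_{1≤i,j≤n} be n² elements of a differential field extension L of F that are differentially algebraically independent over F, with L = F⟨y_{ij} : 1 ≤ i,j ≤ n⟩. Let S = {y_{1j}^k : 1 ≤ j ≤ n} ∪ {y_{1j}^{k−1}·y_{ij} : 2 ≤ i ≤ n, 1 ≤ j ≤ n}. Then L = F⟨S⟩(y_{11}, …, y_{1n}) and L is a finite field extension of F⟨S⟩ of degree exactly kⁿ. -/

import Mathlib

/-!
Grade the differential polynomial ring `F{y}` by `(ℤ/k)ⁿ`, giving every derivative of `y_ij`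
the degree `e_j`. The derivation preserves degrees and every element of `S` has degree `0`, so
by differential algebraic independence each element of `F⟨S⟩` is a quotient of two homogeneous
elements of equal degree. The monomials `∏ y_1j ^ e_j` with `0 ≤ e_j < k` have pairwise distinct
degrees, hence are linearly independent over `F⟨S⟩`. They also span `L`: since `y_1j ^ k ∈ F⟨S⟩`
they span a field, which contains `L = F⟨S⟩(y_11, …, y_1n)` because
`δ y_1j = δ (y_1j ^ k) / (k y_1j ^ (k - 1))` and `y_ij = y_1j ^ (k - 1) y_ij / y_1j ^ (k - 1)`.
-/

/-- `F⟨S⟩`: the smallest differential subfield of `L` containing the subfield `F` and the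
set `S`, i.e. the subfield generated by `F` together with all iterated derivatives of
elements of `S`. -/
def diffAdjoin {L : Type*} [Field L] (δ : L → L) (F : Subfield L) (S : Set L) : Subfield L :=
  Subfield.closure (↑F ∪ {x | ∃ s ∈ S, ∃ m : ℕ, δ^[m] s = x})

open MvPolynomial

namespace Derivation

def ofLeibniz {L : Type*} [CommRing L] (δ : L → L)
    (hadd : ∀ a b, δ (a + b) = δ a + δ b) (hmul : ∀ a b, δ (a * b) = a * δ b + δ a * b) :
    Derivation ℤ L L :=
  Derivation.mk' (AddMonoidHom.mk' δ hadd).toIntLinearMap fun a b => by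
    simp [hmul, mul_comm]

variable {L : Type*} [Field L] (δ : Derivation ℤ L L)

theorem apply_mem_closure {T : Set L} (hT : ∀ x ∈ T, δ x ∈ Subfield.closure T) {x : L}
    (hx : x ∈ Subfield.closure T) : δ x ∈ Subfield.closure T := by
  induction hx using Subfield.closure_induction with
  | mem x hx => exact hT x hx
  | one => simp
  | add x y _ _ hx hy => simpa using add_mem hx hy
  | neg x _ hx => simpa using hx
  | inv x hx' hx =>
    rw [leibniz_inv, smul_eq_mul]
    exact mul_mem (neg_mem (pow_mem (inv_mem hx') 2)) hx
  | mul x y hx' hy' hx hy =>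
    rw [leibniz, smul_eq_mul, smul_eq_mul]
    exact add_mem (mul_mem hx' hy) (mul_mem hy' hx)

theorem apply_mem_of_pow_mem {M : Subfield L} {a : L} {k : ℕ} (hk : (k : L) ≠ 0) (ha : a ≠ 0)
    (haM : a ∈ M) (hδa : δ (a ^ k) ∈ M) : δ a ∈ M := by
  have : δ a = δ (a ^ k) / (k * a ^ (k - 1)) := by
    rw [leibniz_pow, nsmul_eq_mul, smul_eq_mul]
    field_simp
  rw [this]
  exact div_mem hδa (mul_mem (natCast_mem M k) (pow_mem haM _))

end Derivation

section diffAdjoin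

variable {L : Type*} [Field L] {F : Subfield L} {S : Set L}

theorem le_diffAdjoin (δ : L → L) : F ≤ diffAdjoin δ F S :=
  fun _ hx => Subfield.subset_closure (Or.inl hx)

theorem subset_diffAdjoin (δ : L → L) : S ⊆ diffAdjoin δ F S :=
  fun s hs => Subfield.subset_closure (Or.inr ⟨s, hs, 0, rfl⟩)

theorem diffAdjoin_le {δ : L → L} {M : Subfield L} (hF : F ≤ M) (hS : S ⊆ M)
    (hM : ∀ x ∈ M, δ x ∈ M) : diffAdjoin δ F S ≤ M := by
  refine Subfield.closure_le.mpr (Set.union_subset hF ?_)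
  rintro _ ⟨s, hs, m, rfl⟩
  induction m with
  | zero => exact hS hs
  | succ m ih => rw [Function.iterate_succ_apply']; exact hM _ ih

theorem Derivation.apply_mem_diffAdjoin (δ : Derivation ℤ L L) (hF : ∀ x ∈ F, δ x ∈ F)
    {x : L} (hx : x ∈ diffAdjoin δ F S) : δ x ∈ diffAdjoin δ F S := by
  refine δ.apply_mem_closure ?_ hx
  rintro x (hx | ⟨s, hs, m, rfl⟩)
  · exact le_diffAdjoin δ (hF x hx)
  · exact Subfield.subset_closure (Or.inr ⟨s, hs, m + 1, Function.iterate_succ_apply' δ m s⟩)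

end diffAdjoin

theorem closure_union_range_eq_top_of_diffAdjoin_eq_top {L ι κ : Type*} [Field L]
    {δ : Derivation ℤ L L} {F K : Subfield L} {y : ι → κ → L} {k : ℕ} {i₀ : ι}
    (hk : (k : L) ≠ 0) (hy : ∀ j, y i₀ j ≠ 0) (hFK : F ≤ K) (hK : ∀ x ∈ K, δ x ∈ K)
    (hpow : ∀ j, y i₀ j ^ k ∈ K) (hmul : ∀ i j, i ≠ i₀ → y i₀ j ^ (k - 1) * y i j ∈ K)
    (hgen : diffAdjoin δ F {x | ∃ i j, y i j = x} = ⊤) :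
    Subfield.closure (K ∪ Set.range (y i₀)) = ⊤ := by
  set M := Subfield.closure (K ∪ Set.range (y i₀))
  have hKM : K ≤ M := fun x hx => Subfield.subset_closure (Or.inl hx)
  have hy₀M (j : κ) : y i₀ j ∈ M := Subfield.subset_closure (Or.inr ⟨j, rfl⟩)
  have hM : ∀ x ∈ M, δ x ∈ M := fun x => δ.apply_mem_closure <| by
    rintro x (hx | ⟨j, rfl⟩)
    · exact hKM (hK x hx)
    · exact δ.apply_mem_of_pow_mem hk (hy j) (hy₀M j) (hKM (hK _ (hpow j)))
  have hyM (i : ι) (j : κ) : y i j ∈ M := by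
    by_cases hi : i = i₀
    · exact hi ▸ hy₀M j
    · have : y i j = y i₀ j ^ (k - 1) * y i j / y i₀ j ^ (k - 1) := by
        field_simp [pow_ne_zero _ (hy j)]
      rw [this]
      exact div_mem (hKM (hmul i j hi)) (pow_mem (hy₀M j) _)
  rw [eq_top_iff, ← hgen]
  exact diffAdjoin_le (hFK.trans hKM) (by rintro _ ⟨i, j, rfl⟩; exact hyM i j) hM

section Graded

variable {R L M : Type*} [CommRing R] [Field L] [Algebra R L] [AddCommMonoid M]
  (V : M → Submodule R L) [SetLike.GradedMonoid V]

def degreeZeroSubfield : Subfield L where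
  carrier := {x | ∃ d, ∃ q ∈ V d, q ≠ 0 ∧ x * q ∈ V d}
  zero_mem' := ⟨0, 1, SetLike.GradedOne.one_mem, one_ne_zero, by simp⟩
  one_mem' :=
    ⟨0, 1, SetLike.GradedOne.one_mem, one_ne_zero, by simpa using SetLike.GradedOne.one_mem⟩
  add_mem' := by
    rintro x z ⟨d, q, hq, hq0, hxq⟩ ⟨e, r, hr, hr0, hzr⟩
    refine ⟨d + e, q * r, SetLike.mul_mem_graded hq hr, mul_ne_zero hq0 hr0, ?_⟩
    have hzrq := SetLike.mul_mem_graded hzr hq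
    rw [add_comm e] at hzrq
    convert add_mem (SetLike.mul_mem_graded hxq hr) hzrq using 1
    ring
  neg_mem' := by
    rintro x ⟨d, q, hq, hq0, hxq⟩
    exact ⟨d, q, hq, hq0, by simpa using neg_mem hxq⟩
  mul_mem' := by
    rintro x z ⟨d, q, hq, hq0, hxq⟩ ⟨e, r, hr, hr0, hzr⟩
    refine ⟨d + e, q * r, SetLike.mul_mem_graded hq hr, mul_ne_zero hq0 hr0, ?_⟩
    convert SetLike.mul_mem_graded hxq hzr using 1
    ring
  inv_mem' := by
    rintro x ⟨d, q, hq, hq0, hxq⟩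
    rcases eq_or_ne x 0 with rfl | hx0
    · exact ⟨0, 1, SetLike.GradedOne.one_mem, one_ne_zero, by simp⟩
    · exact ⟨d, x * q, hxq, mul_ne_zero hx0 hq0, by rwa [inv_mul_cancel_left₀ hx0]⟩

variable {V}

theorem mem_degreeZeroSubfield_of_mem_zero {x : L} (hx : x ∈ V 0) :
    x ∈ degreeZeroSubfield V :=
  ⟨0, 1, SetLike.GradedOne.one_mem, one_ne_zero, by rwa [mul_one]⟩

theorem Derivation.apply_mem_degreeZeroSubfield (δ : Derivation ℤ L L)
    (hV : ∀ d, ∀ x ∈ V d, δ x ∈ V d) {x : L} (hx : x ∈ degreeZeroSubfield V) :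
    δ x ∈ degreeZeroSubfield V := by
  obtain ⟨d, q, hq, hq0, hxq⟩ := hx
  refine ⟨d + d, q * q, SetLike.mul_mem_graded hq hq, mul_ne_zero hq0 hq0, ?_⟩
  -- `δ x * q ^ 2 = δ (x q) * q - x q * δ q`
  have h := sub_mem (SetLike.mul_mem_graded (hV d _ hxq) hq)
    (SetLike.mul_mem_graded hxq (hV d q hq))
  convert h using 1
  simp only [Derivation.leibniz, smul_eq_mul]
  ring

theorem linearIndependent_of_mem_graded [IsLeftCancelAdd M] (hV : iSupIndep V)
    {K : Subfield L} (hK : K ≤ degreeZeroSubfield V) {ι : Type*} {b : ι → L} {deg : ι → M}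
    (hdeg : Function.Injective deg) (hb : ∀ i, b i ∈ V (deg i)) (hb0 : ∀ i, b i ≠ 0) :
    LinearIndependent K b := by
  classical
  rw [linearIndependent_iff']
  intro s g hg i hi
  choose d q hq hq0 hgq using fun j => hK (g j).2
  set Q := ∏ j ∈ s, q j
  have hQ0 : Q ≠ 0 := Finset.prod_ne_zero_iff.mpr fun j _ => hq0 j
  have hgQ : ∀ j ∈ s, (g j : L) * Q ∈ V (∑ j ∈ s, d j) := by
    intro j hj
    rw [show Q = q j * ∏ l ∈ s.erase j, q l from (Finset.mul_prod_erase s q hj).symm,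
      ← Finset.add_sum_erase s d hj, ← mul_assoc]
    exact SetLike.mul_mem_graded (hgq j) (SetLike.prod_mem_graded _ _ _ fun l _ => hq l)
  have hind : iSupIndep fun j => V ((∑ j ∈ s, d j) + deg j) :=
    hV.comp ((add_right_injective _).comp hdeg)
  have hsum : ∑ j ∈ s, (g j : L) * Q * b j = 0 := by
    simp_rw [mul_right_comm _ Q, ← Finset.sum_mul]
    simp only [Subfield.smul_def, smul_eq_mul] at hg
    rw [hg, zero_mul]
  have := (iSupIndep_iff_finsetSum_eq_zero_imp_eq_zero _).mp hind s _
    (fun j hj => SetLike.mul_mem_graded (hgQ j hj) (hb j)) hsum i hi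
  simpa [hQ0, hb0] using this

end Graded

section HomogeneousImage

variable {L ι M : Type*} [Field L] (F : Subfield L) (v : ι → L) [AddCommMonoid M] (w : ι → M)

noncomputable def homogeneousImage (d : M) : Submodule F L :=
  (weightedHomogeneousSubmodule F w d).map (aeval v).toLinearMap

instance : SetLike.GradedMonoid (homogeneousImage F v w) where
  one_mem := ⟨1, isWeightedHomogeneous_one F w, map_one (aeval v)⟩
  mul_mem := by
    rintro d e _ _ ⟨p, hp, rfl⟩ ⟨q, hq, rfl⟩
    exact ⟨p * q, hp.mul hq, map_mul (aeval v) p q⟩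

variable {v}

theorem iSupIndep_homogeneousImage (hv : AlgebraicIndependent F v) :
    iSupIndep (homogeneousImage F v w) := by
  classical
  exact (aeval v).toLinearMap.iSupIndep_map hv
    (weightedDecomposition F w).isInternal.submodule_iSupIndep

variable {F w}

theorem Derivation.apply_mem_homogeneousImage (δ : Derivation ℤ L L) (hF : ∀ x ∈ F, δ x ∈ F)
    (hv : ∀ s, δ (v s) ∈ homogeneousImage F v w (w s)) {d : M} {x : L}
    (hx : x ∈ homogeneousImage F v w d) : δ x ∈ homogeneousImage F v w d := by
  set V := homogeneousImage F v w
  let P (d : M) (x : L) : Prop := x ∈ V d ∧ δ x ∈ V d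
  have hmul {d e : M} {x y : L} (hx : P d x) (hy : P e y) : P (d + e) (x * y) := by
    refine ⟨SetLike.mul_mem_graded hx.1 hy.1, ?_⟩
    rw [Derivation.leibniz, smul_eq_mul, smul_eq_mul]
    refine add_mem (SetLike.mul_mem_graded hx.1 hy.2) ?_
    exact add_comm e d ▸ SetLike.mul_mem_graded hy.1 hx.2
  have hpow {d : M} {x : L} (hx : P d x) (b : ℕ) : P (b • d) (x ^ b) := by
    induction b with
    | zero => simpa [P] using SetLike.GradedOne.one_mem
    | succ b ih => simpa only [pow_succ, succ_nsmul] using hmul ih hx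
  have hC (a : F) : P 0 (algebraMap F L a) :=
    ⟨⟨C a, isWeightedHomogeneous_C w a, aeval_C v a⟩,
      ⟨C ⟨δ a, hF a a.2⟩, isWeightedHomogeneous_C w _, aeval_C v _⟩⟩
  have hmonomial (m : ι →₀ ℕ) (a : F) : P (Finsupp.weight w m) (aeval v (monomial m a)) := by
    induction m using Finsupp.induction with
    | zero => simpa using hC a
    | single_add s b f _ _ ih =>
      have hX : P (w s) (v s) := ⟨⟨X s, isWeightedHomogeneous_X F w s, aeval_X v s⟩, hv s⟩
      simpa [monomial_single_add, Finsupp.weight_single] using hmul (hpow hX b) ih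
  have hadd {x y : L} (hx : P d x) (hy : P d y) : P d (x + y) :=
    ⟨add_mem hx.1 hy.1, by rw [map_add]; exact add_mem hx.2 hy.2⟩
  obtain ⟨p, hp, rfl⟩ := hx
  have := Finset.sum_induction _ (P d) (fun _ _ => hadd) (by simp [P])
    fun m hm => hp (mem_support_iff.mp hm) ▸ hmonomial m (p.coeff m)
  rw [← map_sum, ← p.as_sum] at this
  exact this.2

theorem diffAdjoin_le_degreeZeroSubfield (δ : Derivation ℤ L L) (hF : ∀ x ∈ F, δ x ∈ F)
    (hv : ∀ s, δ (v s) ∈ homogeneousImage F v w (w s)) {S : Set L}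
    (hS : S ⊆ homogeneousImage F v w 0) :
    diffAdjoin δ F S ≤ degreeZeroSubfield (homogeneousImage F v w) :=
  diffAdjoin_le
    (fun x hx => mem_degreeZeroSubfield_of_mem_zero
      ⟨C ⟨x, hx⟩, isWeightedHomogeneous_C _ _, aeval_C _ _⟩)
    (fun _ hx => mem_degreeZeroSubfield_of_mem_zero (hS hx))
    (fun _ => δ.apply_mem_degreeZeroSubfield fun _ _ => δ.apply_mem_homogeneousImage hF hv)

end HomogeneousImage

section Monomials

variable {L ι : Type*} [Field L] [Fintype ι]

def finMonomial {k : ℕ} (a : ι → L) (e : ι → Fin k) : L :=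
  ∏ j, a j ^ (e j : ℕ)

theorem span_range_finMonomial_eq_top {K : Subfield L} {a : ι → L} {k : ℕ} (hk : 0 < k)
    (ha : ∀ j, a j ^ k ∈ K) (htop : Subfield.closure (K ∪ Set.range a) = ⊤) :
    Submodule.span K (Set.range (finMonomial a : (ι → Fin k) → L)) = ⊤ := by
  classical
  set A := Submodule.span K (Set.range (finMonomial a : (ι → Fin k) → L))
  have hprod (f : ι → ℕ) : ∏ j, a j ^ f j ∈ A := by
    have : ∏ j, a j ^ f j =
        (∏ j, (a j ^ k) ^ (f j / k)) * finMonomial a fun j => ⟨f j % k, Nat.mod_lt _ hk⟩ := by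
      simp only [finMonomial, ← Finset.prod_mul_distrib, ← pow_mul, ← pow_add, Nat.div_add_mod]
    rw [this]
    exact A.smul_mem (⟨_, prod_mem fun j _ => pow_mem (ha j) _⟩ : K)
      (Submodule.subset_span ⟨_, rfl⟩)
  have hone : (1 : L) ∈ A := by simpa using hprod 0
  have hmul : A * A ≤ A := by
    rw [Submodule.span_mul_span, Submodule.span_le]
    rintro _ ⟨_, ⟨e, rfl⟩, _, ⟨e', rfl⟩, rfl⟩
    have := hprod fun j => e j + e' j
    simp only [pow_add, Finset.prod_mul_distrib] at this
    exact this
  let B := A.toSubalgebra hone fun _ _ hx hy => hmul (Submodule.mul_mem_mul hx hy)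
  have haB : Set.range a ⊆ B := by
    rintro _ ⟨j, rfl⟩
    show a j ∈ A
    simpa [Pi.single_apply, pow_ite] using hprod (Pi.single j 1)
  have halg : ∀ x ∈ Set.range a, IsAlgebraic K x := by
    rintro _ ⟨j, rfl⟩
    exact IsAlgebraic.of_pow hk (isAlgebraic_algebraMap (⟨_, ha j⟩ : K))
  refine eq_top_iff.mpr fun x _ => ?_
  have hx : x ∈ IntermediateField.adjoin K (Set.range a) := by
    rw [← IntermediateField.mem_toSubfield, IntermediateField.adjoin_toSubfield,
      show Set.range (algebraMap K L) = K from Subtype.range_coe, htop]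
    trivial
  rw [← IntermediateField.mem_toSubalgebra,
    IntermediateField.adjoin_toSubalgebra_of_isAlgebraic halg] at hx
  exact Algebra.adjoin_le haB hx

end Monomials

section Rows

variable {L ι κ : Type*} [Field L]

def jet (δ : L → L) (y : ι → κ → L) : (ι × κ) × ℕ → L :=
  fun s => δ^[s.2] (y s.1.1 s.1.2)

variable [DecidableEq κ]

def columnWeight (k : ℕ) : (ι × κ) × ℕ → κ → ZMod k :=
  fun s => Pi.single s.1.2 1

variable {F : Subfield L} {δ : L → L} {y : ι → κ → L} {k : ℕ}

theorem mem_homogeneousImage_columnWeight (i : ι) (j : κ) :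
    y i j ∈ homogeneousImage F (jet δ y) (columnWeight k) (Pi.single j 1) :=
  ⟨X ((i, j), 0), isWeightedHomogeneous_X F _ _, aeval_X _ _⟩

theorem apply_jet_mem_homogeneousImage (s : (ι × κ) × ℕ) :
    δ (jet δ y s) ∈ homogeneousImage F (jet δ y) (columnWeight k) (columnWeight k s) :=
  ⟨X (s.1, s.2 + 1), isWeightedHomogeneous_X F _ _,
    (aeval_X _ _).trans (Function.iterate_succ_apply' δ s.2 _)⟩

theorem pow_mem_homogeneousImage_zero (i : ι) (j : κ) :
    y i j ^ k ∈ homogeneousImage F (jet δ y) (columnWeight k) 0 := by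
  have h : k • (Pi.single j 1 : κ → ZMod k) = 0 := by
    ext
    simp
  exact h ▸ SetLike.pow_mem_graded k (mem_homogeneousImage_columnWeight i j)

theorem pow_pred_mul_mem_homogeneousImage_zero (hk : k ≠ 0) (i i' : ι) (j : κ) :
    y i j ^ (k - 1) * y i' j ∈ homogeneousImage F (jet δ y) (columnWeight k) 0 := by
  have h : (k - 1) • (Pi.single j 1 : κ → ZMod k) + Pi.single j 1 = 0 := by
    rw [← succ_nsmul, Nat.sub_add_cancel (Nat.pos_of_ne_zero hk)]
    ext
    simp
  exact h ▸ SetLike.mul_mem_graded (SetLike.pow_mem_graded (k - 1)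
    (mem_homogeneousImage_columnWeight i j)) (mem_homogeneousImage_columnWeight i' j)

theorem finMonomial_mem_homogeneousImage [Fintype κ] (i : ι) (e : κ → Fin k) :
    finMonomial (y i) e ∈
      homogeneousImage F (jet δ y) (columnWeight k) fun j => ((e j : ℕ) : ZMod k) := by
  have h : ∑ j, (e j : ℕ) • (Pi.single j 1 : κ → ZMod k) = fun j => ((e j : ℕ) : ZMod k) := by
    ext j
    simp [Finset.sum_apply, Pi.single_apply]
  exact h ▸ SetLike.prod_mem_graded _ _ _
    fun j _ => SetLike.pow_mem_graded _ (mem_homogeneousImage_columnWeight i j)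

theorem linearIndependent_finMonomial [Fintype κ] (hindep : AlgebraicIndependent F (jet δ y))
    {K : Subfield L} (hK : K ≤ degreeZeroSubfield (homogeneousImage F (jet δ y) (columnWeight k)))
    (i : ι) : LinearIndependent K (finMonomial (y i) : (κ → Fin k) → L) := by
  have hdeg : Function.Injective fun (e : κ → Fin k) j => ((e j : ℕ) : ZMod k) :=
    fun e e' h => funext fun j => Fin.ext <| by
      simpa [ZMod.natCast_eq_natCast_iff', Nat.mod_eq_of_lt] using congrFun h j
  exact linearIndependent_of_mem_graded (iSupIndep_homogeneousImage F _ hindep) hK hdeg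
    (finMonomial_mem_homogeneousImage i) fun e =>
      Finset.prod_ne_zero_iff.mpr fun j _ => pow_ne_zero _ (hindep.ne_zero ((i, j), 0))

end Rows

theorem fixed_field_of_muk_power_general
    (L : Type*) [Field L] [CharZero L] (δ : L → L)
    (hδadd : ∀ a b : L, δ (a + b) = δ a + δ b)
    (hδmul : ∀ a b : L, δ (a * b) = a * δ b + δ a * b)
    (F : Subfield L) (hFδ : ∀ x ∈ F, δ x ∈ F)
    (n k : ℕ) (hn : 1 ≤ n) (hk : 2 ≤ k)
    (y : Fin n → Fin n → L)
    (hindep : AlgebraicIndependent F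
      (fun p : (Fin n × Fin n) × ℕ => δ^[p.2] (y p.1.1 p.1.2)))
    (hgen : diffAdjoin δ F {x | ∃ i j, y i j = x} = ⊤)
    (S : Set L)
    (hS : S = {x | ∃ j, x = (y ⟨0, hn⟩ j) ^ k} ∪
      {x | ∃ i j, i ≠ ⟨0, hn⟩ ∧ x = (y ⟨0, hn⟩ j) ^ (k - 1) * y i j}) :
    Subfield.closure ((diffAdjoin δ F S : Set L) ∪ Set.range (y ⟨0, hn⟩)) = ⊤ ∧
    FiniteDimensional (diffAdjoin δ F S) L ∧
    Module.finrank (diffAdjoin δ F S) L = k ^ n := by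
  set D := Derivation.ofLeibniz δ hδadd hδmul
  have hk0 : k ≠ 0 := by omega
  have hpow (j : Fin n) : y ⟨0, hn⟩ j ^ k ∈ diffAdjoin δ F S :=
    subset_diffAdjoin δ (hS ▸ Or.inl ⟨j, rfl⟩)
  have hmul (i j : Fin n) (hi : i ≠ ⟨0, hn⟩) : y ⟨0, hn⟩ j ^ (k - 1) * y i j ∈ diffAdjoin δ F S :=
    subset_diffAdjoin δ (hS ▸ Or.inr ⟨i, j, hi, rfl⟩)
  have htop := closure_union_range_eq_top_of_diffAdjoin_eq_top (δ := D)
    (Nat.cast_ne_zero.mpr hk0) (fun j => hindep.ne_zero ((_, j), 0)) (le_diffAdjoin δ)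
    (fun _ => D.apply_mem_diffAdjoin hFδ) hpow hmul hgen
  have hSV : S ⊆ homogeneousImage F (jet δ y) (columnWeight k) 0 := by
    rw [hS]
    rintro _ (⟨j, rfl⟩ | ⟨i, j, -, rfl⟩)
    exacts [pow_mem_homogeneousImage_zero _ j, pow_pred_mul_mem_homogeneousImage_zero hk0 _ i j]
  have hK : diffAdjoin δ F S ≤ degreeZeroSubfield _ :=
    diffAdjoin_le_degreeZeroSubfield D hFδ apply_jet_mem_homogeneousImage hSV
  have hli := linearIndependent_finMonomial hindep hK ⟨0, hn⟩
  have B := Module.Basis.mk hli (span_range_finMonomial_eq_top (by omega) hpow htop).ge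
  exact ⟨htop, Module.Finite.of_basis B, by simp [Module.finrank_eq_card_basis B]⟩

/-- Let `F` be a differential field of characteristic zero whose field of constants `C` is
algebraically closed, let `n ≥ 1`, `k ≥ 2`, and let `L = F⟨y_{ij}⟩` for `n²` elements
`y_{ij}` that are differentially algebraically independent over `F`.  With
`S = {y_{1j}^k} ∪ {y_{1j}^{k-1}·y_{ij} : i ≥ 2}` we have `L = F⟨S⟩(y_{11}, …, y_{1n})`,
and `L/F⟨S⟩` is a finite extension of degree exactly `kⁿ`. -/
theorem fixed_field_of_muk_power
    (L : Type*) [Field L] [CharZero L] (δ : L → L)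
    (hδadd : ∀ a b : L, δ (a + b) = δ a + δ b)
    (hδmul : ∀ a b : L, δ (a * b) = a * δ b + δ a * b)
    (F : Subfield L) (hFδ : ∀ x ∈ F, δ x ∈ F)
    (C : Subfield L) (hC : ∀ x : L, x ∈ C ↔ x ∈ F ∧ δ x = 0) (hCalg : IsAlgClosed C)
    (n k : ℕ) (hn : 1 ≤ n) (hk : 2 ≤ k)
    (y : Fin n → Fin n → L)
    (hindep : AlgebraicIndependent F
      (fun p : (Fin n × Fin n) × ℕ => δ^[p.2] (y p.1.1 p.1.2)))
    (hgen : diffAdjoin δ F {x | ∃ i j, y i j = x} = ⊤)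
    (S : Set L)
    (hS : S = {x | ∃ j, x = (y ⟨0, hn⟩ j) ^ k} ∪
      {x | ∃ i j, i ≠ ⟨0, hn⟩ ∧ x = (y ⟨0, hn⟩ j) ^ (k - 1) * y i j}) :
    Subfield.closure ((diffAdjoin δ F S : Set L) ∪ Set.range (y ⟨0, hn⟩)) = ⊤ ∧
    FiniteDimensional (diffAdjoin δ F S) L ∧
    Module.finrank (diffAdjoin δ F S) L = k ^ n :=
  fixed_field_of_muk_power_general L δ hδadd hδmul F hFδ n k hn hk y hindep hgen S hS
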